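/- arXiv:0902.2150 — 2 statements merged into one kernel-verified Lean document; each statement's English description precedes it below -/
import Mathlib

section
/- Let H be a connected graph with girth at least 7 whose square G = H² is not complete. An edge xy of G is contained in at least two distinct maximal cliques of G if and only if xy is an edge of H with both endpoints having degree at least 2 in H. -/
open SimpleGraph

variable {V : Type*}

/-- The square of a graph: `x` and `y` are adjacent iff `1 ≤ d_H(x,y) ≤ 2`. -/
def graphSq (H : SimpleGraph V) : SimpleGraph V where
  Adj x y := x ≠ y ∧ (H.Adj x y ∨ ∃ z, H.Adj x z ∧ H.Adj z y)
  symm := by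
    refine ⟨?_⟩
    rintro x y ⟨hxy, h | ⟨z, h1, h2⟩⟩
    · exact ⟨hxy.symm, Or.inl h.symm⟩
    · exact ⟨hxy.symm, Or.inr ⟨z, h2.symm, h1.symm⟩⟩
  loopless := ⟨fun x h => h.1 rfl⟩

/-- `Q` is a maximal clique of `G`. -/
def IsMaxClique (G : SimpleGraph V) (Q : Set V) : Prop :=
  G.IsClique Q ∧ ∀ R : Set V, G.IsClique R → Q ⊆ R → R = Q

/-- `xy` is a forced edge of `G`: it lies in at least two distinct maximal cliques. -/
def Forced (G : SimpleGraph V) (x y : V) : Prop :=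
  G.Adj x y ∧ ∃ Q₁ Q₂ : Set V, Q₁ ≠ Q₂ ∧ IsMaxClique G Q₁ ∧ IsMaxClique G Q₂ ∧
    x ∈ Q₁ ∧ y ∈ Q₁ ∧ x ∈ Q₂ ∧ y ∈ Q₂

/-- The subgraph of `G` consisting of all forced edges. -/
def forcedSubgraph (G : SimpleGraph V) : SimpleGraph V where
  Adj := Forced G
  symm := by
    refine ⟨?_⟩
    rintro x y ⟨hadj, Q₁, Q₂, hne, h1, h2, hx1, hy1, hx2, hy2⟩
    exact ⟨hadj.symm, Q₁, Q₂, hne, h1, h2, hy1, hx1, hy2, hx2⟩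
  loopless := ⟨fun x h => h.1.ne rfl⟩

/-- `H` contains no cycle of length 3 and no cycle of length 5. -/
def C3C5Free (H : SimpleGraph V) : Prop :=
  ∀ (v : V) (w : H.Walk v v), w.IsCycle → w.length ≠ 3 ∧ w.length ≠ 5

/-- The set `S` induces a star in `F`: at least two vertices, a center adjacent to
all others, and the non-center vertices pairwise non-adjacent. -/
def IsStarOn (F : SimpleGraph V) (S : Set V) : Prop :=
  S.Nontrivial ∧ ∃ c ∈ S, (∀ x ∈ S, x ≠ c → F.Adj c x) ∧
    ∀ x ∈ S, ∀ y ∈ S, x ≠ c → y ≠ c → x ≠ y → ¬ F.Adj x y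

/-! In a graph `H` of girth at least 7, every clique of `H²` lies in a closed neighbourhood
`N[u]`: if the clique contains an edge `pq` of `H`, it lies in `N[p]` or `N[q]` (there are no
cycles of length 3, 4 or 5), and otherwise any three of its vertices have a common neighbour
(there are no cycles of length 4 or 6). Hence the maximal cliques of `H²` are exactly the `N[u]`
with `deg u ≥ 2`; a maximal `N[u]` with `deg u ≤ 1` would be closed under adjacency, hence all of
`V` for connected `H`, making `H²` complete. Finally, two distinct closed neighbourhoods `N[u]`,
`N[v]` share two vertices only if `uv` is an edge, and then they share exactly `u` and `v`. -/

section ShortCycles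

variable {H : SimpleGraph V} {a b c d e x y z : V}

-- Stated with `egirth`, since `girth` takes the junk value `0` on acyclic graphs.
lemma not_adj_of_four_le_egirth (h : 4 ≤ H.egirth) (hab : H.Adj a b) (hbc : H.Adj b c) :
    ¬H.Adj c a := fun hca => by
  have hw : (Walk.cons hab (Walk.cons hbc (Walk.cons hca Walk.nil))).IsCycle := by
    simp [Walk.isCycle_def, Walk.isTrail_def]; grind [Adj.ne']
  exact absurd (h.trans (egirth_le_length hw)) (by norm_num)

lemma eq_of_common_adj_of_five_le_egirth (h : 5 ≤ H.egirth) (hac : a ≠ c) (hab : H.Adj a b)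
    (hbc : H.Adj b c) (hcd : H.Adj c d) (hda : H.Adj d a) : b = d := by
  by_contra hbd
  have hw : (Walk.cons hab (Walk.cons hbc (Walk.cons hcd (Walk.cons hda Walk.nil)))).IsCycle := by
    simp [Walk.isCycle_def, Walk.isTrail_def]; grind [Adj.ne']
  exact absurd (h.trans (egirth_le_length hw)) (by norm_num)

lemma not_adj_of_six_le_egirth (h : 6 ≤ H.egirth) (hab : H.Adj a b) (hbc : H.Adj b c)
    (hcd : H.Adj c d) (hde : H.Adj d e) : ¬H.Adj e a := fun hea => by
  have h4 : 4 ≤ H.egirth := le_trans (by norm_num) h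
  have hac : a ≠ c := by rintro rfl; exact not_adj_of_four_le_egirth h4 hcd hde hea
  have had : a ≠ d := by rintro rfl; exact not_adj_of_four_le_egirth h4 hab hbc hcd
  have hbd : b ≠ d := by rintro rfl; exact not_adj_of_four_le_egirth h4 hde hea hab
  have hbe : b ≠ e := by rintro rfl; exact not_adj_of_four_le_egirth h4 hbc hcd hde
  have hce : c ≠ e := by rintro rfl; exact not_adj_of_four_le_egirth h4 hea hab hbc
  have hw : (Walk.cons hab (Walk.cons hbc (Walk.cons hcd (Walk.cons hde
      (Walk.cons hea Walk.nil))))).IsCycle := by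
    simp [Walk.isCycle_def, Walk.isTrail_def]; grind [Adj.ne']
  exact absurd (h.trans (egirth_le_length hw)) (by norm_num)

lemma eq_of_common_adj_of_seven_le_egirth (h : 7 ≤ H.egirth) (hab : a ≠ b) (hbc : b ≠ c)
    (hca : c ≠ a) (hza : H.Adj z a) (hzb : H.Adj z b) (hxb : H.Adj x b) (hxc : H.Adj x c)
    (hyc : H.Adj y c) (hya : H.Adj y a) : z = x := by
  have h4 : 4 ≤ H.egirth := le_trans (by norm_num) h
  have h5 : 5 ≤ H.egirth := le_trans (by norm_num) h
  by_contra hzx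
  have hxy : x ≠ y := by
    rintro rfl; exact hzx (eq_of_common_adj_of_five_le_egirth h5 hab hza.symm hzb hxb.symm hya)
  have hyz : y ≠ z := by
    rintro rfl; exact hzx (eq_of_common_adj_of_five_le_egirth h5 hbc hzb.symm hyc hxc.symm hxb)
  have hax : a ≠ x := by rintro rfl; exact not_adj_of_four_le_egirth h4 hza hxb hzb.symm
  have hby : b ≠ y := by rintro rfl; exact not_adj_of_four_le_egirth h4 hxb hyc hxc.symm
  have hcz : c ≠ z := by rintro rfl; exact not_adj_of_four_le_egirth h4 hza hya.symm hyc
  have hw : (Walk.cons hza.symm (Walk.cons hzb (Walk.cons hxb.symm (Walk.cons hxc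
      (Walk.cons hyc.symm (Walk.cons hya Walk.nil)))))).IsCycle := by
    simp [Walk.isCycle_def, Walk.isTrail_def]; grind [Adj.ne']
  exact absurd (h.trans (egirth_le_length hw)) (by norm_num)

end ShortCycles

section SquareCliques

variable {H : SimpleGraph V} {S : Set V} {a b p q z : V}

def closedNbhd (H : SimpleGraph V) (u : V) : Set V := insert u (H.neighborSet u)

lemma self_mem_closedNbhd (u : V) : u ∈ closedNbhd H u := Or.inl rfl

lemma isClique_graphSq_closedNbhd (u : V) : (graphSq H).IsClique (closedNbhd H u) := by
  rintro s (rfl | hs) t (rfl | ht) hst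
  · exact absurd rfl hst
  · exact ⟨hst, Or.inl ht⟩
  · exact ⟨hst, Or.inl hs.symm⟩
  · exact ⟨hst, Or.inr ⟨u, hs.symm, ht⟩⟩

lemma SimpleGraph.IsClique.mem_closedNbhd_or_mem_closedNbhd (h : 6 ≤ H.egirth)
    (hS : (graphSq H).IsClique S) (hp : p ∈ S) (hq : q ∈ S) (hpq : H.Adj p q) {c : V} (hc : c ∈ S) :
    c ∈ closedNbhd H p ∨ c ∈ closedNbhd H q := by
  by_cases hcp : c = p
  · exact Or.inl (Or.inl hcp)
  by_cases hcq : c = q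
  · exact Or.inr (Or.inl hcq)
  obtain ⟨-, hpc | ⟨z, hpz, hzc⟩⟩ := hS hp hc (Ne.symm hcp)
  · exact Or.inl (Or.inr hpc)
  obtain ⟨-, hqc | ⟨w, hqw, hwc⟩⟩ := hS hq hc (Ne.symm hcq)
  · exact Or.inr (Or.inr hqc)
  exact absurd hpq.symm (not_adj_of_six_le_egirth h hpz hzc hwc.symm hqw.symm)

lemma SimpleGraph.IsClique.subset_closedNbhd_of_adj (h : 6 ≤ H.egirth) (hS : (graphSq H).IsClique S)
    (hp : p ∈ S) (hq : q ∈ S) (hpq : H.Adj p q) :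
    S ⊆ closedNbhd H p ∨ S ⊆ closedNbhd H q := by
  rw [or_iff_not_imp_left, Set.not_subset]
  rintro ⟨c, hcS, hcp⟩ d hdS
  by_contra hdq
  have hqc : H.Adj q c := by
    rcases hS.mem_closedNbhd_or_mem_closedNbhd h hp hq hpq hcS with h' | (rfl | h')
    exacts [absurd h' hcp, absurd (Or.inr hpq) hcp, h']
  have hpd : H.Adj p d := by
    rcases hS.mem_closedNbhd_or_mem_closedNbhd h hp hq hpq hdS with (rfl | h') | h'
    exacts [absurd (Or.inr hpq.symm) hdq, h', absurd h' hdq]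
  have hcd : c ≠ d := by rintro rfl; exact hcp (Or.inr hpd)
  obtain ⟨-, hcd' | ⟨z, hcz, hzd⟩⟩ := hS hcS hdS hcd
  · have hpc : p ≠ c := fun hpc => hcp (Or.inl hpc.symm)
    have hqd :=
      eq_of_common_adj_of_five_le_egirth (le_trans (by norm_num) h) hpc hpq hqc hcd' hpd.symm
    exact hdq (Or.inl hqd.symm)
  · exact not_adj_of_six_le_egirth h hpq hqc hcz hzd hpd.symm

lemma SimpleGraph.IsClique.subset_closedNbhd_of_forall_not_adj (h : 7 ≤ H.egirth)
    (hS : (graphSq H).IsClique S) (hind : ∀ p ∈ S, ∀ q ∈ S, ¬H.Adj p q) (ha : a ∈ S) (hb : b ∈ S)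
    (hab : a ≠ b) (hza : H.Adj z a) (hzb : H.Adj z b) : S ⊆ closedNbhd H z := by
  intro c hc
  by_cases hca : c = a
  · exact Or.inr (hca ▸ hza)
  by_cases hcb : c = b
  · exact Or.inr (hcb ▸ hzb)
  obtain ⟨-, hbc | ⟨x, hbx, hxc⟩⟩ := hS hb hc (Ne.symm hcb)
  · exact absurd hbc (hind b hb c hc)
  obtain ⟨-, hca' | ⟨y, hcy, hya⟩⟩ := hS hc ha hca
  · exact absurd hca' (hind c hc a ha)
  have hzx := eq_of_common_adj_of_seven_le_egirth h hab (Ne.symm hcb) hca hza hzb hbx.symm hxc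
    hcy.symm hya
  exact Or.inr (hzx ▸ hxc)

lemma SimpleGraph.IsClique.exists_subset_closedNbhd (h : 7 ≤ H.egirth) (hS : (graphSq H).IsClique S)
    (hne : S.Nonempty) : ∃ u, S ⊆ closedNbhd H u := by
  by_cases hedge : ∃ p ∈ S, ∃ q ∈ S, H.Adj p q
  · obtain ⟨p, hp, q, hq, hpq⟩ := hedge
    rcases hS.subset_closedNbhd_of_adj (le_trans (by norm_num) h) hp hq hpq with hsub | hsub
    exacts [⟨p, hsub⟩, ⟨q, hsub⟩]
  push Not at hedge
  rcases hne.exists_eq_singleton_or_nontrivial with ⟨a, rfl⟩ | ⟨a, ha, b, hb, hab⟩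
  · exact ⟨a, Set.singleton_subset_iff.mpr (self_mem_closedNbhd a)⟩
  obtain ⟨-, hab' | ⟨z, haz, hzb⟩⟩ := hS ha hb hab
  · exact absurd hab' (hedge a ha b hb)
  exact ⟨z, hS.subset_closedNbhd_of_forall_not_adj h hedge ha hb hab haz.symm hzb⟩

end SquareCliques

section MaxCliques

variable {H : SimpleGraph V} {Q : Set V} {u v x y : V}

lemma SimpleGraph.Preconnected.eq_univ_of_adj_mem {G : SimpleGraph V} (hG : G.Preconnected)
    {s : Set V} (hs : s.Nonempty) (hadj : ∀ ⦃v w⦄, v ∈ s → G.Adj v w → w ∈ s) : s = Set.univ := by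
  obtain ⟨u, hu⟩ := hs
  refine Set.eq_univ_of_forall fun w => ?_
  obtain ⟨p⟩ := hG u w
  induction p with
  | nil => exact hu
  | cons h p ih => exact ih (hadj hu h)

lemma two_le_degree_iff [Fintype V] [DecidableRel H.Adj] :
    2 ≤ H.degree u ↔ (H.neighborSet u).Nontrivial := by
  rw [← card_neighborFinset_eq_degree]
  exact Finset.one_lt_card_iff_nontrivial.trans (by rw [Finset.Nontrivial, coe_neighborFinset])

lemma isMaxClique_closedNbhd (h : 7 ≤ H.egirth) (hu : (H.neighborSet u).Nontrivial) :
    IsMaxClique (graphSq H) (closedNbhd H u) := by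
  refine ⟨isClique_graphSq_closedNbhd u, fun R hR hsub => ?_⟩
  obtain ⟨w, hRw⟩ := hR.exists_subset_closedNbhd h ⟨u, hsub (self_mem_closedNbhd u)⟩
  obtain ⟨a, ha, b, hb, hab⟩ := hu
  have hwu : w = u := by
    by_contra hwu
    have hwu' : H.Adj w u := (hRw (hsub (self_mem_closedNbhd u))).resolve_left (Ne.symm hwu)
    have hnbr : ∀ c, H.Adj u c → c = w := fun c hc =>
      (hRw (hsub (Or.inr hc))).resolve_right
        fun hwc => not_adj_of_four_le_egirth (le_trans (by norm_num) h) hwu' hc (Adj.symm hwc)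
    exact hab ((hnbr a ha).trans (hnbr b hb).symm)
  exact (hsub.antisymm (hwu ▸ hRw)).symm

lemma IsMaxClique.exists_eq_closedNbhd (h : 7 ≤ H.egirth) (hQ : IsMaxClique (graphSq H) Q)
    (hne : Q.Nonempty) : ∃ u, Q = closedNbhd H u := by
  obtain ⟨u, hsub⟩ := hQ.1.exists_subset_closedNbhd h hne
  exact ⟨u, (hQ.2 _ (isClique_graphSq_closedNbhd u) hsub).symm⟩

lemma IsMaxClique.nontrivial_neighborSet (hH : H.Preconnected) (hnc : graphSq H ≠ ⊤)
    (hQ : IsMaxClique (graphSq H) (closedNbhd H u)) : (H.neighborSet u).Nontrivial := by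
  -- If `u` has at most one neighbour, maximality makes `N[u]` closed under adjacency.
  by_contra hsub
  rw [Set.not_nontrivial_iff] at hsub
  refine hnc (isClique_univ.mp ?_)
  rw [← hH.eq_univ_of_adj_mem ⟨u, self_mem_closedNbhd u⟩ ?_]
  · exact hQ.1
  rintro w w' (rfl | huw) hww'
  · exact Or.inr hww'
  have hsub' : closedNbhd H u ⊆ closedNbhd H w := by
    rintro t (rfl | hut)
    · exact Or.inr huw.symm
    · exact Or.inl (hsub hut huw)
  rw [← hQ.2 _ (isClique_graphSq_closedNbhd w) hsub']
  exact Or.inr hww'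

lemma eq_and_eq_or_of_mem_closedNbhd (h : 5 ≤ H.egirth) (huv : u ≠ v) (hxy : x ≠ y)
    (hxu : x ∈ closedNbhd H u) (hyu : y ∈ closedNbhd H u) (hxv : x ∈ closedNbhd H v)
    (hyv : y ∈ closedNbhd H v) : x = u ∧ y = v ∨ x = v ∧ y = u := by
  have h4 : 4 ≤ H.egirth := le_trans (by norm_num) h
  rcases hxu with rfl | hux <;> rcases hxv with rfl | hvx
  · exact absurd rfl huv
  · rcases hyv with rfl | hvy
    · exact Or.inl ⟨rfl, rfl⟩
    · have hxy' : H.Adj x y := hyu.resolve_left (Ne.symm hxy)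
      exact absurd hvx (not_adj_of_four_le_egirth h4 hxy' hvy.symm)
  · rcases hyu with rfl | huy
    · exact Or.inr ⟨rfl, rfl⟩
    · have hxy' : H.Adj x y := hyv.resolve_left (Ne.symm hxy)
      exact absurd hux (not_adj_of_four_le_egirth h4 hxy' huy.symm)
  · rcases hyu with rfl | huy
    · exact absurd (hyv.resolve_left huv) (not_adj_of_four_le_egirth h4 hux hvx.symm)
    rcases hyv with rfl | hvy
    · exact absurd huy (not_adj_of_four_le_egirth h4 hvx hux.symm)
    · exact absurd (eq_of_common_adj_of_five_le_egirth h huv hux hvx.symm hvy huy.symm) hxy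

lemma closedNbhd_ne_of_adj (h : 4 ≤ H.egirth) (hxy : H.Adj x y)
    (hx : (H.neighborSet x).Nontrivial) : closedNbhd H x ≠ closedNbhd H y := by
  intro heq
  obtain ⟨c, hxc, hcy⟩ := hx.exists_ne y
  rcases (heq ▸ Or.inr hxc : c ∈ closedNbhd H y) with rfl | hyc
  · exact hcy rfl
  · exact not_adj_of_four_le_egirth h hxy hyc hxc.symm

end MaxCliques

theorem stmt2 [Fintype V] (H : SimpleGraph V) [DecidableRel H.Adj]
    (hconn : H.Connected) (hgirth : 7 ≤ H.girth) (hnc : graphSq H ≠ ⊤)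
    (x y : V) (hxy : (graphSq H).Adj x y) :
    (∃ Q₁ Q₂ : Set V, Q₁ ≠ Q₂ ∧ IsMaxClique (graphSq H) Q₁ ∧ IsMaxClique (graphSq H) Q₂ ∧
        x ∈ Q₁ ∧ y ∈ Q₁ ∧ x ∈ Q₂ ∧ y ∈ Q₂) ↔
      (H.Adj x y ∧ 2 ≤ H.degree x ∧ 2 ≤ H.degree y) := by
  have h7 : 7 ≤ H.egirth := le_trans (by exact_mod_cast hgirth) H.egirth.natCast_toNat_le_self
  simp only [two_le_degree_iff]
  constructor
  · rintro ⟨Q₁, Q₂, hne, h₁, h₂, hx₁, hy₁, hx₂, hy₂⟩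
    obtain ⟨u, rfl⟩ := h₁.exists_eq_closedNbhd h7 ⟨x, hx₁⟩
    obtain ⟨v, rfl⟩ := h₂.exists_eq_closedNbhd h7 ⟨x, hx₂⟩
    have hu := h₁.nontrivial_neighborSet hconn.preconnected hnc
    have hv := h₂.nontrivial_neighborSet hconn.preconnected hnc
    have huv : u ≠ v := by rintro rfl; exact hne rfl
    rcases eq_and_eq_or_of_mem_closedNbhd (le_trans (by norm_num) h7) huv hxy.1 hx₁ hy₁ hx₂ hy₂
      with ⟨rfl, rfl⟩ | ⟨rfl, rfl⟩
    · exact ⟨hy₁.resolve_left hxy.1.symm, hu, hv⟩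
    · exact ⟨hy₂.resolve_left hxy.1.symm, hv, hu⟩
  · rintro ⟨hadj, hx, hy⟩
    exact ⟨_, _, closedNbhd_ne_of_adj (le_trans (by norm_num) h7) hadj hx,
      isMaxClique_closedNbhd h7 hx, isMaxClique_closedNbhd h7 hy, self_mem_closedNbhd x,
      Or.inr hadj, Or.inr hadj.symm, self_mem_closedNbhd y⟩
end

section
/- Let G be a connected graph, v a vertex of G, and U ⊆ N_G(v). If H₁ and H₂ are both {C₃,C₅}-free graphs with H₁² = G = H₂² and N_{H₁}(v) = U = N_{H₂}(v), then H₁ = H₂. -/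
open SimpleGraph

variable {V : Type*}

/-!
Agreement of the two neighbourhoods spreads along the edges of `H₁`: if `N_{H₁}(u) = N_{H₂}(u)`
and `uw` is an edge, then in a `{C₃,C₅}`-free graph `N(w)` consists of `u` together with the
common `H²`-neighbours of `u` and `w` outside `N(u)`, a description that only involves the common
square and `N(u)`. Since `H₁²` is connected, so is `H₁`, and agreement reaches every vertex from `v`.
-/

theorem SimpleGraph.Preconnected.forall_of_adj {G : SimpleGraph V} (hG : G.Preconnected)
    {P : V → Prop} {v : V} (hv : P v) (hP : ∀ ⦃x y⦄, G.Adj x y → P x → P y) (a : V) : P a := by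
  have hva := (reachable_iff_reflTransGen v a).1 (hG v a)
  induction hva with
  | refl => exact hv
  | tail _ hxy ih => exact hP hxy ih

theorem reachable_of_graphSq_adj {H : SimpleGraph V} {x y : V} (h : (graphSq H).Adj x y) :
    H.Reachable x y := by
  obtain ⟨-, hxy | ⟨z, hxz, hzy⟩⟩ := h
  · exact hxy.reachable
  · exact hxz.reachable.trans hzy.reachable

theorem preconnected_of_graphSq {H : SimpleGraph V} (h : (graphSq H).Preconnected) :
    H.Preconnected := fun x ↦
  h.forall_of_adj (Reachable.refl x) fun _ _ hyz hxy ↦ hxy.trans (reachable_of_graphSq_adj hyz)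

namespace C3C5Free

variable {H : SimpleGraph V}

theorem not_adj_of_triangle (h : C3C5Free H) {a b c : V} (hab : H.Adj a b) (hbc : H.Adj b c) :
    ¬ H.Adj c a := fun hca ↦ by
  refine (h a (.cons hab (.cons hbc (.cons hca .nil))) ?_).1 rfl
  simp [Walk.cons_isCycle_iff, hab.ne, hbc.ne, hca.ne, hab.ne', hca.ne']

theorem not_adj_of_pentagon (h : C3C5Free H) {a b c d e : V} (hab : H.Adj a b)
    (hbc : H.Adj b c) (hcd : H.Adj c d) (hde : H.Adj d e) (hac : a ≠ c) (had : a ≠ d)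
    (hbd : b ≠ d) (hbe : b ≠ e) (hce : c ≠ e) : ¬ H.Adj e a := fun hea ↦ by
  refine (h a (.cons hab (.cons hbc (.cons hcd (.cons hde (.cons hea .nil))))) ?_).2 rfl
  simp [Walk.cons_isCycle_iff, hab.ne, hbc.ne, hcd.ne, hde.ne, hea.ne, hab.ne', hea.ne',
    hac, had, hbd, hbe, hce, hac.symm, had.symm]

/-- A common neighbour of `u` and `w` would close a triangle, and a vertex at distance two from
both `u` and `w` but not adjacent to `w` would close a pentagon. -/
theorem adj_iff_of_adj (h : C3C5Free H) {u w : V} (huw : H.Adj u w) (x : V) :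
    H.Adj w x ↔ x = u ∨ ((graphSq H).Adj u x ∧ (graphSq H).Adj w x ∧ ¬ H.Adj u x) := by
  constructor
  · intro hwx
    by_cases hxu : x = u
    · exact .inl hxu
    · exact .inr ⟨⟨Ne.symm hxu, .inr ⟨w, huw, hwx⟩⟩, ⟨hwx.ne, .inl hwx⟩,
        fun hux ↦ h.not_adj_of_triangle huw hwx hux.symm⟩
  · rintro (rfl | ⟨⟨hux, hux₂⟩, ⟨hwx, hwx₂⟩, hnux⟩)
    · exact huw.symm
    obtain hwx₁ | ⟨z, hwz, hzx⟩ := hwx₂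
    · exact hwx₁
    obtain hux₁ | ⟨y, huy, hyx⟩ := hux₂
    · exact absurd hux₁ hnux
    by_cases hwy : w = y
    · exact hwy ▸ hyx
    have huz : u ≠ z := fun e ↦ hnux (e ▸ hzx)
    have hzy : z ≠ y := fun e ↦ h.not_adj_of_triangle huw (e ▸ hwz) huy.symm
    exact absurd huy.symm (h.not_adj_of_pentagon huw hwz hzx hyx.symm huz hux hwx hwy hzy)

end C3C5Free

theorem neighborSet_eq_of_adj {H₁ H₂ : SimpleGraph V} (h₁ : C3C5Free H₁) (h₂ : C3C5Free H₂)
    (hsq : graphSq H₁ = graphSq H₂) {u w : V} (hu : H₁.neighborSet u = H₂.neighborSet u)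
    (huw : H₁.Adj u w) : H₁.neighborSet w = H₂.neighborSet w := by
  have hu' (x : V) : H₁.Adj u x ↔ H₂.Adj u x := Set.ext_iff.1 hu x
  ext x
  show H₁.Adj w x ↔ H₂.Adj w x
  exact (h₁.adj_iff_of_adj huw x).trans <| by
    rw [h₂.adj_iff_of_adj ((hu' w).1 huw) x, hsq, hu' x]

theorem eq_of_graphSq_eq {H₁ H₂ : SimpleGraph V} (h₁ : C3C5Free H₁) (h₂ : C3C5Free H₂)
    (hsq : graphSq H₁ = graphSq H₂) (hconn : (graphSq H₁).Preconnected) {v : V}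
    (hv : H₁.neighborSet v = H₂.neighborSet v) : H₁ = H₂ := by
  have hN := (preconnected_of_graphSq hconn).forall_of_adj hv
    fun _ _ hxy hx ↦ neighborSet_eq_of_adj h₁ h₂ hsq hx hxy
  ext a b
  exact Set.ext_iff.1 (hN a) b

theorem stmt9_general (G : SimpleGraph V) (hconn : G.Connected)
    (v : V) (U : Set V)
    (H₁ H₂ : SimpleGraph V) (h₁ : C3C5Free H₁) (h₂ : C3C5Free H₂)
    (hsq₁ : graphSq H₁ = G) (hsq₂ : graphSq H₂ = G)
    (hN₁ : H₁.neighborSet v = U) (hN₂ : H₂.neighborSet v = U) :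
    H₁ = H₂ :=
  eq_of_graphSq_eq h₁ h₂ (hsq₁.trans hsq₂.symm) (hsq₁ ▸ hconn.preconnected)
    (hN₁.trans hN₂.symm)

theorem stmt9 (G : SimpleGraph V) (hconn : G.Connected)
    (v : V) (U : Set V) (hU : U ⊆ G.neighborSet v)
    (H₁ H₂ : SimpleGraph V) (h₁ : C3C5Free H₁) (h₂ : C3C5Free H₂)
    (hsq₁ : graphSq H₁ = G) (hsq₂ : graphSq H₂ = G)
    (hN₁ : H₁.neighborSet v = U) (hN₂ : H₂.neighborSet v = U) :
    H₁ = H₂ :=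
  stmt9_general G hconn v U H₁ H₂ h₁ h₂ hsq₁ hsq₂ hN₁ hN₂
end
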